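/- arXiv:1902.06081 — 2 statements merged into one kernel-verified Lean document; each statement's English description precedes it below -/
import Mathlib

section
/- Let (Ω, A, ν) be a probability space and let (E_n)_{n=1}^∞ be a sequence of measurable sets such that Σ_{n=1}^∞ ν(E_n) = ∞. Suppose there exists a constant C > 0 such that Σ_{n,m=1}^N ν(E_n ∩ E_m) ≤ C (Σ_{n=1}^N ν(E_n))² holds for infinitely many N ∈ ℕ. Then ν(limsup_{n → ∞} E_n) ≥ 1/C. -/
/-!
Cauchy–Schwarz applied to `∑_{n ∈ F} 1_{E n}` on `⋃_{n ∈ F} E n` gives the Chung–Erdős inequality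
`(∑_{n ∈ F} ν (E n))² ≤ (∑_{n,m ∈ F} ν (E n ∩ E m)) · ν (⋃_{n ∈ F} E n)`.
Take `F = [K, N)` with `N` one of the quasi-independent indices and write `t N = ∑_{n < N} ν (E n)`:
the right side is at most `C t_N² · ν (⋃_{n ≥ K} E n)` and the left side at least `(t_N - t_K)²`.
Since `t_N → ∞`, letting `N → ∞` gives `ν (⋃_{n ≥ K} E n) ≥ 1/C` for every `K`, and continuity
from above passes this to the limsup.
-/

open MeasureTheory Filter Topology Finset
open scoped ENNReal

theorem ENNReal.tendsto_sub_div_self {α : Type*} {l : Filter α} {t : α → ℝ≥0∞} {a : ℝ≥0∞}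
    (ha : a ≠ ∞) (ht : ∀ᶠ x in l, t x ≠ ∞) (hlim : Tendsto t l (𝓝 ∞)) :
    Tendsto (fun x => (t x - a) / t x) l (𝓝 1) := by
  have hsub : Tendsto (fun x => 1 - a / t x) l (𝓝 1) := by
    simpa using ENNReal.Tendsto.sub tendsto_const_nhds (ENNReal.Tendsto.const_div hlim (.inr ha))
      (.inl ENNReal.one_ne_top)
  refine hsub.congr' ?_
  filter_upwards [ht, hlim.eventually (eventually_gt_nhds ha.lt_top)] with x htx hax
  rw [ENNReal.sub_div fun _ _ => (pos_of_gt hax).ne', ENNReal.div_self (pos_of_gt hax).ne' htx]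

namespace MeasureTheory

variable {Ω ι : Type*} [MeasurableSpace Ω]

theorem sq_lintegral_le_lintegral_sq_mul_measure_univ (μ : Measure Ω) {f : Ω → ℝ≥0∞}
    (hf : AEMeasurable f μ) : (∫⁻ ω, f ω ∂μ) ^ 2 ≤ (∫⁻ ω, f ω ^ 2 ∂μ) * μ Set.univ := by
  have hHolder := ENNReal.lintegral_mul_le_Lp_mul_Lq μ Real.HolderConjugate.two_two hf
    aemeasurable_const (g := 1)
  simp only [Pi.mul_apply, Pi.one_apply, mul_one, lintegral_const, ENNReal.rpow_two, one_pow,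
    one_mul] at hHolder
  rwa [← ENNReal.mul_rpow_of_nonneg _ _ (by norm_num), one_div, ENNReal.le_rpow_inv_iff two_pos,
    ENNReal.rpow_two] at hHolder

theorem lintegral_sum_indicator_one (μ : Measure Ω) {E : ι → Set Ω}
    (hE : ∀ n, MeasurableSet (E n)) (F : Finset ι) :
    ∫⁻ ω, ∑ n ∈ F, (E n).indicator 1 ω ∂μ = ∑ n ∈ F, μ (E n) := by
  rw [lintegral_finsetSum _ fun n _ => measurable_one.indicator (hE n)]
  exact sum_congr rfl fun n _ => lintegral_indicator_one (hE n)

theorem lintegral_sq_sum_indicator_one (μ : Measure Ω) {E : ι → Set Ω}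
    (hE : ∀ n, MeasurableSet (E n)) (F : Finset ι) :
    ∫⁻ ω, (∑ n ∈ F, (E n).indicator 1 ω) ^ 2 ∂μ = ∑ n ∈ F, ∑ m ∈ F, μ (E n ∩ E m) := by
  have hsq : ∀ ω, (∑ n ∈ F, (E n).indicator (1 : Ω → ℝ≥0∞) ω) ^ 2
      = ∑ p ∈ F ×ˢ F, (E p.1 ∩ E p.2).indicator 1 ω := fun ω => by
    simp only [sq, sum_mul_sum, sum_product, Set.inter_indicator_one, Pi.mul_apply]
  simp_rw [hsq]
  exact (lintegral_sum_indicator_one μ (E := fun p : ι × ι => E p.1 ∩ E p.2)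
    (fun p => (hE p.1).inter (hE p.2)) (F ×ˢ F)).trans (sum_product ..)

theorem sq_sum_measure_le_sum_measure_inter_mul_measure_biUnion (ν : Measure Ω)
    {E : ι → Set Ω} (hE : ∀ n, MeasurableSet (E n)) (F : Finset ι) :
    (∑ n ∈ F, ν (E n)) ^ 2 ≤ (∑ n ∈ F, ∑ m ∈ F, ν (E n ∩ E m)) * ν (⋃ n ∈ F, E n) := by
  set A := ⋃ n ∈ F, E n
  have hCS := sq_lintegral_le_lintegral_sq_mul_measure_univ (ν.restrict A)
    (f := fun ω => ∑ n ∈ F, (E n).indicator 1 ω)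
    (Finset.measurable_fun_sum F fun n _ => measurable_one.indicator (hE n)).aemeasurable
  rw [lintegral_sum_indicator_one _ hE, lintegral_sq_sum_indicator_one _ hE,
    Measure.restrict_apply_univ] at hCS
  calc (∑ n ∈ F, ν (E n)) ^ 2 = (∑ n ∈ F, ν.restrict A (E n)) ^ 2 := by
        congr 1
        exact sum_congr rfl fun n hn =>
          (Measure.restrict_eq_self ν (Set.subset_iUnion₂ (s := fun n (_ : n ∈ F) => E n) n hn)).symm
    _ ≤ (∑ n ∈ F, ∑ m ∈ F, ν.restrict A (E n ∩ E m)) * ν A := hCS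
    _ ≤ (∑ n ∈ F, ∑ m ∈ F, ν (E n ∩ E m)) * ν A := by
        gcongr
        exact Measure.restrict_le_self

theorem sq_sub_div_le_mul_measure_iUnion_ge (ν : Measure Ω) {E : ℕ → Set Ω}
    (hE : ∀ n, MeasurableSet (E n)) {K N : ℕ} (hKN : K ≤ N) {c : ℝ≥0∞}
    (hN : ∑ n ∈ range N, ∑ m ∈ range N, ν (E n ∩ E m) ≤ c * (∑ n ∈ range N, ν (E n)) ^ 2) :
    ((∑ n ∈ range N, ν (E n) - ∑ n ∈ range K, ν (E n)) / ∑ n ∈ range N, ν (E n)) ^ 2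
      ≤ c * ν (⋃ n ≥ K, E n) := by
  rw [div_eq_mul_inv, mul_pow, ← ENNReal.inv_pow, ← div_eq_mul_inv]
  refine ENNReal.div_le_of_le_mul ?_
  have hIco : Ico K N ⊆ range N := by
    rw [range_eq_Ico]; exact Ico_subset_Ico_left (Nat.zero_le K)
  calc (∑ n ∈ range N, ν (E n) - ∑ n ∈ range K, ν (E n)) ^ 2
      ≤ (∑ n ∈ Ico K N, ν (E n)) ^ 2 := by
        gcongr
        rw [← sum_range_add_sum_Ico _ hKN]
        exact add_tsub_le_left
    _ ≤ (∑ n ∈ Ico K N, ∑ m ∈ Ico K N, ν (E n ∩ E m)) * ν (⋃ n ∈ Ico K N, E n) :=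
        sq_sum_measure_le_sum_measure_inter_mul_measure_biUnion ν hE _
    _ ≤ (∑ n ∈ range N, ∑ m ∈ range N, ν (E n ∩ E m)) * ν (⋃ n ≥ K, E n) := by
        gcongr
        · exact (sum_le_sum fun n _ => sum_le_sum_of_subset hIco).trans (sum_le_sum_of_subset hIco)
        · exact Set.iUnion_mono' fun hn => ⟨(mem_Ico.1 hn).1, subset_rfl⟩
    _ ≤ c * (∑ n ∈ range N, ν (E n)) ^ 2 * ν (⋃ n ≥ K, E n) := by gcongr
    _ = c * ν (⋃ n ≥ K, E n) * (∑ n ∈ range N, ν (E n)) ^ 2 := by ring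

theorem le_measure_iInter_iUnion_ge (ν : Measure Ω) [IsFiniteMeasure ν] {E : ℕ → Set Ω}
    (hE : ∀ n, MeasurableSet (E n)) {a : ℝ≥0∞} (ha : ∀ K, a ≤ ν (⋃ n ≥ K, E n)) :
    a ≤ ν (⋂ K, ⋃ n ≥ K, E n) := by
  have hU_anti : Antitone fun K => ⋃ n ≥ K, E n := fun K L hKL =>
    Set.iUnion₂_mono' fun n hn => ⟨n, hKL.trans hn, subset_rfl⟩
  have hU_meas : ∀ K, MeasurableSet (⋃ n ≥ K, E n) := fun K =>
    MeasurableSet.iUnion fun n => MeasurableSet.iUnion fun _ => hE n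
  rw [hU_anti.measure_iInter (fun K => (hU_meas K).nullMeasurableSet) ⟨0, measure_ne_top ν _⟩]
  exact le_iInf ha

theorem one_le_mul_measure_iUnion_ge (ν : Measure Ω) [IsFiniteMeasure ν] {E : ℕ → Set Ω}
    (hE : ∀ n, MeasurableSet (E n)) (hdiv : ∑' n, ν (E n) = ∞) {c : ℝ≥0∞}
    (hqi : ∃ᶠ N in atTop,
      ∑ n ∈ range N, ∑ m ∈ range N, ν (E n ∩ E m) ≤ c * (∑ n ∈ range N, ν (E n)) ^ 2)
    (K : ℕ) : 1 ≤ c * ν (⋃ n ≥ K, E n) := by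
  set t : ℕ → ℝ≥0∞ := fun N => ∑ n ∈ range N, ν (E n)
  have ht_ne_top : ∀ N, t N ≠ ∞ := fun N => ENNReal.sum_ne_top.2 fun n _ => measure_ne_top ν _
  have ht_top : Tendsto t atTop (𝓝 ∞) := hdiv ▸ ENNReal.tendsto_nat_tsum _
  have hlim : Tendsto (fun N => ((t N - t K) / t N) ^ 2) atTop (𝓝 1) := by
    simpa using ENNReal.Tendsto.pow (n := 2)
      (ENNReal.tendsto_sub_div_self (ht_ne_top K) (.of_forall ht_ne_top) ht_top)
  refine isClosed_Iic.mem_of_frequently_of_tendsto ?_ hlim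
  exact (hqi.and_eventually (eventually_ge_atTop K)).mono
    fun N ⟨hN, hKN⟩ => sq_sub_div_le_mul_measure_iUnion_ge ν hE hKN hN

end MeasureTheory

theorem divergence_borel_cantelli_general
    {Ω : Type*} [MeasurableSpace Ω] (ν : Measure Ω) [IsProbabilityMeasure ν]
    (E : ℕ → Set Ω) (hE : ∀ n, MeasurableSet (E n))
    (hdiv : ∑' n, ν (E n) = ⊤)
    (C : ℝ)
    (hqi : {N : ℕ |
        ∑ n ∈ Finset.range N, ∑ m ∈ Finset.range N, ν (E n ∩ E m)
          ≤ ENNReal.ofReal C * (∑ n ∈ Finset.range N, ν (E n)) ^ 2}.Infinite) :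
    ENNReal.ofReal (1 / C) ≤ ν (⋂ N : ℕ, ⋃ n : ℕ, ⋃ _ : N ≤ n, E n) := by
  show ENNReal.ofReal (1 / C) ≤ ν (⋂ K, ⋃ n ≥ K, E n)
  refine le_measure_iInter_iUnion_ge ν hE fun K => ?_
  calc ENNReal.ofReal (1 / C) ≤ 1 / ENNReal.ofReal C := by
        rw [one_div, one_div]; exact ENNReal.ofReal_inv_le
    _ ≤ ν (⋃ n ≥ K, E n) := ENNReal.div_le_of_le_mul'
        (one_le_mul_measure_iUnion_ge ν hE hdiv (Nat.frequently_atTop_iff_infinite.2 hqi) K)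

/-- **Divergence Borel–Cantelli lemma** (Chow–Yang, Lemma 3.2). -/
theorem divergence_borel_cantelli
    {Ω : Type*} [MeasurableSpace Ω] (ν : Measure Ω) [IsProbabilityMeasure ν]
    (E : ℕ → Set Ω) (hE : ∀ n, MeasurableSet (E n))
    (hdiv : ∑' n, ν (E n) = ⊤)
    (C : ℝ) (hC : 0 < C)
    (hqi : {N : ℕ |
        ∑ n ∈ Finset.range N, ∑ m ∈ Finset.range N, ν (E n ∩ E m)
          ≤ ENNReal.ofReal C * (∑ n ∈ Finset.range N, ν (E n)) ^ 2}.Infinite) :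
    ENNReal.ofReal (1 / C) ≤ ν (⋂ N : ℕ, ⋃ n : ℕ, ⋃ _ : N ≤ n, E n) :=
  divergence_borel_cantelli_general ν E hE hdiv C hqi
end

section
/- There exist absolute constants 0 < c ≤ C such that the following holds. Let g = 𝔨 𝔞 𝔫 ∈ SL(3,ℝ), where 𝔨 ∈ SO(3,ℝ), 𝔞 = diag(a₁, a₂, a₃) with a₁, a₂, a₃ > 0, a₁a₂a₃ = 1, a₁ ≤ (√3/2) a₂ and a₂ ≤ (√3/2) a₃, and 𝔫 is upper-triangular unipotent with off-diagonal entries n₁, n₂, n₃ satisfying |n_i| ≤ 1/2 for i = 1,2,3. Then c · a₁ ≤ min{‖g v‖ : v ∈ ℤ³ \ {0}} ≤ C · a₁, and likewise c · a₁ ≤ ‖g e₁‖ ≤ C · a₁, where e₁ = (1,0,0). -/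
/-!
Write `g = k b` with `b = 𝔞𝔫` upper triangular. The rotation `k` preserves the Euclidean norm,
so it distorts the sup norm by a factor of at most `√3`. For a nonzero integral `v` with last
nonzero coordinate `v j`, one has `(b v) j = a_j v_j`, whence `‖b v‖ ≥ a_j ≥ a₁` because the Siegel
condition forces `a₁ ≤ a₂ ≤ a₃`; and `b e₁ = a₁ e₁`. So `c = 1/√3` and `C = √3` work.
-/

open Matrix

section SupNorm

variable {ι : Type*} [Fintype ι]

theorem norm_le_sqrt_dotProduct_self (x : ι → ℝ) : ‖x‖ ≤ √(x ⬝ᵥ x) := by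
  refine pi_norm_le_iff_of_nonneg (Real.sqrt_nonneg _) |>.mpr fun i => ?_
  rw [Real.norm_eq_abs, ← Real.sqrt_sq_eq_abs]
  refine Real.sqrt_le_sqrt ?_
  rw [sq]
  exact Finset.single_le_sum (f := fun j => x j * x j) (fun j _ => mul_self_nonneg (x j))
    (Finset.mem_univ i)

theorem sqrt_dotProduct_self_le (x : ι → ℝ) : √(x ⬝ᵥ x) ≤ √(Fintype.card ι) * ‖x‖ := by
  have hx : x ⬝ᵥ x ≤ Fintype.card ι * ‖x‖ ^ 2 := by
    calc x ⬝ᵥ x = ∑ i, |x i| ^ 2 := by simp [dotProduct, sq]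
      _ ≤ ∑ _i : ι, ‖x‖ ^ 2 := Finset.sum_le_sum fun i _ => by
          gcongr; exact norm_le_pi_norm x i
      _ = Fintype.card ι * ‖x‖ ^ 2 := by simp
  calc √(x ⬝ᵥ x) ≤ √(Fintype.card ι * ‖x‖ ^ 2) := Real.sqrt_le_sqrt hx
    _ = √(Fintype.card ι) * ‖x‖ := by
      rw [Real.sqrt_mul (Nat.cast_nonneg _), Real.sqrt_sq (norm_nonneg x)]

variable [DecidableEq ι] {k : Matrix ι ι ℝ}

theorem dotProduct_self_mulVec_of_mem_orthogonalGroup (hk : k ∈ orthogonalGroup ι ℝ)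
    (y : ι → ℝ) : (k *ᵥ y) ⬝ᵥ (k *ᵥ y) = y ⬝ᵥ y := by
  have hkk : kᵀ * k = 1 := by simpa using (mem_orthogonalGroup_iff' ι ℝ).mp hk
  rw [dotProduct_mulVec, vecMul_mulVec, hkk, vecMul_one]

theorem norm_le_sqrt_card_mul_norm_mulVec (hk : k ∈ orthogonalGroup ι ℝ) (y : ι → ℝ) :
    ‖y‖ ≤ √(Fintype.card ι) * ‖k *ᵥ y‖ := by
  calc ‖y‖ ≤ √(y ⬝ᵥ y) := norm_le_sqrt_dotProduct_self y
    _ = √((k *ᵥ y) ⬝ᵥ (k *ᵥ y)) := by rw [dotProduct_self_mulVec_of_mem_orthogonalGroup hk]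
    _ ≤ _ := sqrt_dotProduct_self_le _

theorem norm_mulVec_le_sqrt_card_mul_norm (hk : k ∈ orthogonalGroup ι ℝ) (y : ι → ℝ) :
    ‖k *ᵥ y‖ ≤ √(Fintype.card ι) * ‖y‖ := by
  calc ‖k *ᵥ y‖ ≤ √((k *ᵥ y) ⬝ᵥ (k *ᵥ y)) := norm_le_sqrt_dotProduct_self _
    _ = √(y ⬝ᵥ y) := by rw [dotProduct_self_mulVec_of_mem_orthogonalGroup hk]
    _ ≤ _ := sqrt_dotProduct_self_le _

end SupNorm

theorem le_norm_mulVec_intCast_of_blockTriangular {ι : Type*} [Fintype ι] [LinearOrder ι]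
    {B : Matrix ι ι ℝ} (hB : B.BlockTriangular id) {m : ℝ} (hm : ∀ i, m ≤ |B i i|)
    {v : ι → ℤ} (hv : v ≠ 0) : m ≤ ‖B *ᵥ fun i => (v i : ℝ)‖ := by
  obtain ⟨j, hj, hjmax⟩ := Finset.exists_max_image (Finset.univ.filter (v · ≠ 0)) id
    (by simpa [Finset.filter_nonempty_iff, funext_iff] using hv)
  simp only [Finset.mem_filter, Finset.mem_univ, true_and, id] at hj hjmax
  -- Upper triangularity kills the terms below `j`, maximality of `j` those above it.
  have hBv : (B *ᵥ fun i => (v i : ℝ)) j = B j j * v j := by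
    refine Finset.sum_eq_single j (fun i _ hij => ?_) (by simp)
    change B j i * (v i : ℝ) = 0
    rcases hij.lt_or_gt with hij | hij
    · rw [hB hij, zero_mul]
    · rw [not_imp_comm.mp (hjmax i) hij.not_ge, Int.cast_zero, mul_zero]
  calc m ≤ |B j j| := hm j
    _ ≤ |B j j| * |(v j : ℝ)| :=
        le_mul_of_one_le_right (abs_nonneg _) (by exact_mod_cast Int.one_le_abs hj)
    _ = |(B *ᵥ fun i => (v i : ℝ)) j| := by rw [hBv, abs_mul]
    _ ≤ _ := (Real.norm_eq_abs _).symm.trans_le (norm_le_pi_norm _ j)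

theorem le_sqrt_card_mul_norm_mul_mulVec_intCast {ι : Type*} [Fintype ι] [LinearOrder ι]
    {k B : Matrix ι ι ℝ} (hk : k ∈ orthogonalGroup ι ℝ) (hB : B.BlockTriangular id) {m : ℝ}
    (hm : ∀ i, m ≤ |B i i|) {v : ι → ℤ} (hv : v ≠ 0) :
    m ≤ √(Fintype.card ι) * ‖(k * B) *ᵥ fun i => (v i : ℝ)‖ := by
  rw [← mulVec_mulVec]
  exact (le_norm_mulVec_intCast_of_blockTriangular hB hm hv).trans
    (norm_le_sqrt_card_mul_norm_mulVec hk _)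

theorem le_of_le_sqrt_three_div_two_mul {x y : ℝ} (hy : 0 ≤ y) (h : x ≤ √3 / 2 * y) : x ≤ y := by
  have : √3 ≤ 2 := Real.sqrt_le_iff.mpr ⟨by norm_num, by norm_num⟩
  exact h.trans (mul_le_of_le_one_left hy (by linarith))

theorem blockTriangular_unitriangular (n₁ n₂ n₃ : ℝ) :
    (!![1, n₁, n₂; 0, 1, n₃; 0, 0, 1] : Matrix (Fin 3) (Fin 3) ℝ).BlockTriangular id := by
  intro i j hij
  fin_cases i <;> fin_cases j <;> simp_all

theorem le_abs_diagonal_mul_unitriangular_apply_self {a₁ a₂ a₃ : ℝ} (h₁₂ : a₁ ≤ a₂)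
    (h₂₃ : a₂ ≤ a₃) (n₁ n₂ n₃ : ℝ) (i : Fin 3) :
    a₁ ≤ |(diagonal ![a₁, a₂, a₃] * !![1, n₁, n₂; 0, 1, n₃; 0, 0, 1]) i i| := by
  refine le_trans ?_ (le_abs_self _)
  fin_cases i <;> simp <;> linarith

theorem norm_diagonal_mul_unitriangular_mulVec_e₁_le {a₁ : ℝ} (h₁ : 0 ≤ a₁)
    (a₂ a₃ n₁ n₂ n₃ : ℝ) :
    ‖(diagonal ![a₁, a₂, a₃] * !![1, n₁, n₂; 0, 1, n₃; 0, 0, 1]) *ᵥ ![1, 0, 0]‖ ≤ a₁ := by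
  refine pi_norm_le_iff_of_nonneg h₁ |>.mpr fun i => ?_
  fin_cases i <;> simp [mulVec, dotProduct, Fin.sum_univ_three, abs_of_nonneg h₁, h₁]

/-- **Shortest lattice vectors on a Siegel set** (from Chow–Yang, Lemma 5.1). -/
theorem siegel_set_shortest_vector :
    ∃ c C : ℝ, 0 < c ∧ c ≤ C ∧
      ∀ (k : Matrix (Fin 3) (Fin 3) ℝ), k ∈ Matrix.specialOrthogonalGroup (Fin 3) ℝ →
      ∀ a₁ a₂ a₃ : ℝ, 0 < a₁ → 0 < a₂ → 0 < a₃ →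
        a₁ * a₂ * a₃ = 1 →
        a₁ ≤ (Real.sqrt 3 / 2) * a₂ → a₂ ≤ (Real.sqrt 3 / 2) * a₃ →
      ∀ n₁ n₂ n₃ : ℝ, |n₁| ≤ 1 / 2 → |n₂| ≤ 1 / 2 → |n₃| ≤ 1 / 2 →
        (∀ v : Fin 3 → ℤ, v ≠ 0 →
          c * a₁ ≤ ‖(k * Matrix.diagonal ![a₁, a₂, a₃] * !![1, n₁, n₂; 0, 1, n₃; 0, 0, 1]).mulVec
            fun i => ((v i : ℝ))‖) ∧
        (∃ v : Fin 3 → ℤ, v ≠ 0 ∧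
          ‖(k * Matrix.diagonal ![a₁, a₂, a₃] * !![1, n₁, n₂; 0, 1, n₃; 0, 0, 1]).mulVec
            fun i => ((v i : ℝ))‖ ≤ C * a₁) ∧
        c * a₁ ≤ ‖(k * Matrix.diagonal ![a₁, a₂, a₃] * !![1, n₁, n₂; 0, 1, n₃; 0, 0, 1]).mulVec
            ![1, 0, 0]‖ ∧
        ‖(k * Matrix.diagonal ![a₁, a₂, a₃] * !![1, n₁, n₂; 0, 1, n₃; 0, 0, 1]).mulVec
            ![1, 0, 0]‖ ≤ C * a₁ := by
  have hsqrt3 : 1 ≤ √3 := Real.one_le_sqrt.mpr (by norm_num)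
  refine ⟨(√3)⁻¹, √3, by positivity, (inv_le_one_of_one_le₀ hsqrt3).trans hsqrt3, ?_⟩
  intro k hk a₁ a₂ a₃ h₁ h₂ h₃ _ hs₁₂ hs₂₃ n₁ n₂ n₃ _ _ _
  have hk : k ∈ orthogonalGroup (Fin 3) ℝ := (mem_specialOrthogonalGroup_iff.mp hk).1
  have h₁₂ := le_of_le_sqrt_three_div_two_mul h₂.le hs₁₂
  have h₂₃ := le_of_le_sqrt_three_div_two_mul h₃.le hs₂₃
  have hcard : √(Fintype.card (Fin 3) : ℝ) = √3 := by simp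
  have hlow (v : Fin 3 → ℤ) (hv : v ≠ 0) : (√3)⁻¹ * a₁ ≤
      ‖(k * diagonal ![a₁, a₂, a₃] * !![1, n₁, n₂; 0, 1, n₃; 0, 0, 1]) *ᵥ fun i => (v i : ℝ)‖ := by
    rw [inv_mul_le_iff₀ (by positivity), mul_assoc, ← hcard]
    exact le_sqrt_card_mul_norm_mul_mulVec_intCast hk
      ((blockTriangular_diagonal _).mul (blockTriangular_unitriangular n₁ n₂ n₃))
      (le_abs_diagonal_mul_unitriangular_apply_self h₁₂ h₂₃ n₁ n₂ n₃) hv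
  have he₁ : (fun i => ((![1, 0, 0] : Fin 3 → ℤ) i : ℝ)) = ![1, 0, 0] := by
    ext i; fin_cases i <;> simp
  have hup : ‖(k * diagonal ![a₁, a₂, a₃] * !![1, n₁, n₂; 0, 1, n₃; 0, 0, 1]) *ᵥ ![1, 0, 0]‖ ≤
      √3 * a₁ := by
    rw [mul_assoc, ← mulVec_mulVec, ← hcard]
    exact (norm_mulVec_le_sqrt_card_mul_norm hk _).trans
      (by gcongr; exact norm_diagonal_mul_unitriangular_mulVec_e₁_le h₁.le a₂ a₃ n₁ n₂ n₃)
  have he₁_ne : (![1, 0, 0] : Fin 3 → ℤ) ≠ 0 := fun h => by simpa using congrFun h 0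
  exact ⟨hlow, ⟨_, he₁_ne, he₁ ▸ hup⟩, he₁ ▸ hlow _ he₁_ne, hup⟩
end
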